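/- Let m ≥ 2 be even, let K be a totally real algebraic extension of ℚ with [K:ℚ] infinite, let δ ∈ O_K^+ be a totally positive algebraic integer of K, and let O be an order in K. Suppose there exist an integer n ≥ 1, a finitely generated O-submodule Λ ⊆ Kⁿ, and a totally positive definite homogeneous polynomial f ∈ K[x₁,…,xₙ] of degree m with f(v) ∈ O_K for all v ∈ Λ, such that for every α ∈ O^+ there exists v ∈ Λ with f(v) = δ·α. Then O^+ does not have the Northcott property. -/

import Mathlib

/-! If `O⁺` had the Northcott property, it would be contained in a number field. Since `f` is
totally positive definite and has only finitely many conjugates, there is `λ > 0` with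
`λ‖x‖^m ≤ τ(f)(x)` for every real embedding `τ`. So if `f(v) = δα`, every conjugate of every
coordinate of `v` is `O(house(α)^(1/m))`; after clearing a common denominator `d` of `Λ` and
adding a natural number, the coordinates become elements `βⱼ ∈ O⁺` of house `O(√house(α))`, with
`α ∈ ℚ(δ, d, coefficients of f, β)`. Descending on the house, `O⁺` lies in the field generated by
these constants and the finitely many elements of `O⁺` of small house. That field is finite over
`ℚ`, yet it contains `O` (shift by integers) and hence `K = Frac(O)`. -/

open MvPolynomial

/-- The house of an algebraic number `α`: the maximum of `|σ(α)|` over the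
embeddings `σ` into `ℂ`. -/
noncomputable def house' {K : Type*} [Field K] (α : K) : ℝ :=
  ⨆ σ : K →+* ℂ, ‖σ α‖

/-- A set `S` of elements of a field of algebraic numbers has the Northcott
property (with respect to the house) if for every real `c > 0` the set of
elements of `S` of house less than `c` is finite. -/
def HasNorthcott {K : Type*} [Field K] (S : Set K) : Prop :=
  ∀ c : ℝ, 0 < c → {α : K | α ∈ S ∧ house' α < c}.Finite

def IsTotallyPositive {K : Type*} [Field K] (x : K) : Prop :=
  ∀ σ : K →+* ℂ, 0 < (σ x).re

section House

variable {K : Type*} [Field K] [CharZero K] [Algebra.IsAlgebraic ℚ K]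

lemma finite_range_embedding_apply (A : Type*) [Field A] [CharZero A] (x : K) :
    (Set.range fun σ : K →+* A => σ x).Finite := by
  refine ((minpoly ℚ x).rootSet_finite A).subset ?_
  rintro _ ⟨σ, rfl⟩
  have hx : IsIntegral ℚ x := (Algebra.IsAlgebraic.isAlgebraic x).isIntegral
  refine (Polynomial.mem_rootSet).mpr ⟨minpoly.ne_zero hx, ?_⟩
  change Polynomial.aeval (σ.toRatAlgHom x) _ = 0
  rw [Polynomial.aeval_algHom_apply, minpoly.aeval, map_zero]

lemma finite_range_norm_embedding_apply (x : K) :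
    (Set.range fun σ : K →+* ℂ => ‖σ x‖).Finite :=
  ((finite_range_embedding_apply ℂ x).image norm).subset <| by
    rintro _ ⟨σ, rfl⟩
    exact ⟨σ x, ⟨σ, rfl⟩, rfl⟩

lemma exists_norm_eq_house' (x : K) : ∃ σ : K →+* ℂ, ‖σ x‖ = house' x := by
  have hne : (Set.range fun σ : K →+* ℂ => ‖σ x‖).Nonempty :=
    ⟨_, (IsAlgClosed.lift : K →ₐ[ℚ] ℂ).toRingHom, rfl⟩
  exact hne.csSup_mem (finite_range_norm_embedding_apply x)

lemma norm_le_house' (σ : K →+* ℂ) (x : K) : ‖σ x‖ ≤ house' x :=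
  le_ciSup (finite_range_norm_embedding_apply x).bddAbove σ

lemma house'_le {x : K} {B : ℝ} (h : ∀ σ : K →+* ℂ, ‖σ x‖ ≤ B) : house' x ≤ B := by
  obtain ⟨σ, hσ⟩ := exists_norm_eq_house' x
  exact hσ ▸ h σ

lemma house'_nonneg (x : K) : 0 ≤ house' x := by
  obtain ⟨σ, hσ⟩ := exists_norm_eq_house' x
  exact hσ ▸ norm_nonneg _

lemma house'_add_le (x y : K) : house' (x + y) ≤ house' x + house' y :=
  house'_le fun σ => (map_add σ x y ▸ norm_add_le _ _).trans <|
    add_le_add (norm_le_house' σ x) (norm_le_house' σ y)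

lemma house'_mul_le (x y : K) : house' (x * y) ≤ house' x * house' y :=
  house'_le fun σ => by
    rw [map_mul, norm_mul]
    exact mul_le_mul (norm_le_house' σ x) (norm_le_house' σ y) (norm_nonneg _) (house'_nonneg x)

lemma house'_natCast_le (t : ℕ) : house' (t : K) ≤ t :=
  house'_le fun σ => by rw [map_natCast, Complex.norm_natCast]

lemma abs_le_house' (τ : K →+* ℝ) (x : K) : |τ x| ≤ house' x := by
  simpa using norm_le_house' (Complex.ofRealHom.comp τ) x

lemma exists_abs_eq_house'_of_forall_im_eq_zero (hK : ∀ σ : K →+* ℂ, ∀ x : K, (σ x).im = 0)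
    (x : K) : ∃ τ : K →+* ℝ, |τ x| = house' x := by
  obtain ⟨σ, hσ⟩ := exists_norm_eq_house' x
  have hσ_real : NumberField.ComplexEmbedding.IsReal σ :=
    NumberField.ComplexEmbedding.isReal_iff.mpr <|
      RingHom.ext fun y => Complex.conj_eq_iff_im.mpr (hK σ y)
  refine ⟨hσ_real.embedding, ?_⟩
  rw [← hσ, ← hσ_real.coe_embedding_apply, Complex.norm_real, Real.norm_eq_abs]

lemma IsTotallyPositive.ne_zero {x : K} (hx : IsTotallyPositive x) : x ≠ 0 := by
  rintro rfl
  simpa using hx (IsAlgClosed.lift : K →ₐ[ℚ] ℂ).toRingHom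

lemma exists_natCast_add_isTotallyPositive (x : K) :
    ∃ t : ℕ, IsTotallyPositive (x + t) ∧ house' (x + t) ≤ 2 * house' x + 2 := by
  obtain ⟨t, hxt, htx⟩ : ∃ t : ℕ, house' x < t ∧ (t : ℝ) ≤ house' x + 2 :=
    ⟨⌈house' x⌉₊ + 1, by push_cast; linarith [Nat.le_ceil (house' x)],
      by push_cast; linarith [Nat.ceil_lt_add_one (house'_nonneg x)]⟩
  refine ⟨t, fun σ => ?_, ?_⟩
  · have hre := (abs_le.mp ((Complex.abs_re_le_norm (σ x)).trans (norm_le_house' σ x))).1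
    rw [map_add, map_natCast, Complex.add_re, Complex.natCast_re]
    linarith
  · linarith [house'_add_le x t, house'_natCast_le (K := K) t]

end House

lemma mul_add_le_sub_one_of_pow_le {m : ℕ} (hm : 2 ≤ m) {a b C N h : ℝ} (ha : 0 ≤ a)
    (hb : 0 ≤ b) (hN : 0 ≤ N) (hNh : N ^ m ≤ C * h) (hh : 4 * a ^ 2 * max 1 C + 2 * b + 2 ≤ h) :
    a * N + b ≤ h - 1 := by
  have hC : 1 ≤ max 1 C := le_max_left 1 C
  have h1 : 2 * b + 2 ≤ h := by nlinarith [sq_nonneg a]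
  have hsq : N ^ 2 ≤ max 1 C * h := by
    rcases le_total N 1 with hN1 | hN1
    · nlinarith [pow_le_one₀ hN hN1 (n := 2)]
    · calc N ^ 2 ≤ N ^ m := pow_le_pow_right₀ hN1 hm
        _ ≤ C * h := hNh
        _ ≤ max 1 C * h := mul_le_mul_of_nonneg_right (le_max_right 1 C) (by linarith)
  have haN : a * N ≤ h / 2 := by
    refine (pow_le_pow_iff_left₀ (by positivity) (by linarith) two_ne_zero).mp ?_
    calc (a * N) ^ 2 = a ^ 2 * N ^ 2 := mul_pow a N 2
      _ ≤ a ^ 2 * (max 1 C * h) := by gcongr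
      _ ≤ (h / 2) ^ 2 := by nlinarith [sq_nonneg a]
  linarith

namespace MvPolynomial

lemma IsHomogeneous.eval_smul {ι R : Type*} [CommSemiring R] {m : ℕ} {p : MvPolynomial ι R}
    (hp : p.IsHomogeneous m) (c : R) (x : ι → R) : eval (c • x) p = c ^ m * eval x p := by
  rw [eval_eq, eval_eq, Finset.mul_sum]
  refine Finset.sum_congr rfl fun d hd => ?_
  have hdeg : ∑ i ∈ d.support, d i = m := by
    rw [← Finsupp.degree_apply, Finsupp.degree_eq_weight_one]
    exact hp (mem_support_iff.mp hd)
  simp only [Pi.smul_apply, smul_eq_mul, mul_pow, Finset.prod_mul_distrib,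
    Finset.prod_pow_eq_pow_sum, hdeg]
  ring

lemma IsHomogeneous.exists_pos_mul_norm_pow_le_eval {ι : Type*} [Fintype ι] [Nonempty ι]
    {m : ℕ} {p : MvPolynomial ι ℝ} (hp : p.IsHomogeneous m)
    (hpos : ∀ x : ι → ℝ, x ≠ 0 → 0 < eval x p) :
    ∃ lam > 0, ∀ x : ι → ℝ, lam * ‖x‖ ^ m ≤ eval x p := by
  have hS : (Metric.sphere (0 : ι → ℝ) 1).Nonempty := NormedSpace.sphere_nonempty.mpr zero_le_one
  obtain ⟨y₀, hy₀, hmin⟩ := (isCompact_sphere (0 : ι → ℝ) 1).exists_isMinOn hS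
    (continuous_eval p).continuousOn
  refine ⟨eval y₀ p, hpos y₀ (ne_zero_of_mem_unit_sphere ⟨y₀, hy₀⟩), fun x => ?_⟩
  obtain ⟨y, hy, hxy⟩ : ∃ y ∈ Metric.sphere (0 : ι → ℝ) 1, ‖x‖ • y = x := by
    rcases eq_or_ne x 0 with rfl | hx
    · exact ⟨y₀, hy₀, by simp⟩
    · exact ⟨‖x‖⁻¹ • x, by simp [norm_smul, hx], by simp [smul_smul, hx]⟩
  calc eval y₀ p * ‖x‖ ^ m ≤ eval y p * ‖x‖ ^ m := by gcongr; exact hmin hy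
    _ = eval x p := by conv_rhs => rw [← hxy, hp.eval_smul, mul_comm]

lemma finite_range_map {ι K A : Type*} [Field K] [CharZero K] [Algebra.IsAlgebraic ℚ K]
    [Field A] [CharZero A] (p : MvPolynomial ι K) :
    (Set.range fun σ : K →+* A => map σ p).Finite := by
  refine Set.Finite.of_finite_image
    (f := fun (q : MvPolynomial ι A) (e : p.support) => coeff (e : ι →₀ ℕ) q) ?_ ?_
  · refine (Set.Finite.pi (t := fun e : p.support => Set.range fun σ : K →+* A => σ (coeff e p))
      fun e => finite_range_embedding_apply A _).subset ?_
    rintro _ ⟨_, ⟨σ, rfl⟩, rfl⟩ e -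
    exact ⟨σ, (coeff_map σ p e).symm⟩
  · rintro _ ⟨σ₁, rfl⟩ _ ⟨σ₂, rfl⟩ h
    ext e
    by_cases he : e ∈ p.support
    · exact congr_fun h ⟨e, he⟩
    · simp [coeff_map, notMem_support_iff.mp he]

end MvPolynomial

lemma mem_adjoin_of_eval_eq {K ι : Type*} [Field K] [CharZero K] {f : MvPolynomial ι K}
    {v : ι → K} {δ d α : K} (t : ι → ℕ) (hδ : δ ≠ 0) (hd : d ≠ 0) (hv : eval v f = δ * α) :
    α ∈ IntermediateField.adjoin ℚ
      (insert δ (insert d (f.coeffs : Set K)) ∪ Set.range fun j => d * v j + t j) := by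
  set E := IntermediateField.adjoin ℚ
    (insert δ (insert d (f.coeffs : Set K)) ∪ Set.range fun j => d * v j + t j)
  have hE : insert δ (insert d (f.coeffs : Set K)) ∪ Set.range (fun j => d * v j + t j) ⊆ E :=
    IntermediateField.subset_adjoin ℚ _
  have hvE : ∀ j, v j ∈ E := fun j => by
    have hvj : v j = (d * v j + t j - t j) / d := by field_simp; ring
    rw [hvj]
    exact div_mem (sub_mem (hE (Or.inr ⟨j, rfl⟩)) (natCast_mem E _))
      (hE (Or.inl (Set.mem_insert_of_mem δ (Set.mem_insert d _))))
  have hfE : eval v f ∈ E := MvPolynomial.eval_mem (fun e he => hE <|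
    Or.inl (Set.mem_insert_of_mem δ (Set.mem_insert_of_mem d
      (coeff_mem_coeffs e (mem_support_iff.mp he))))) hvE
  rw [show α = eval v f / δ by rw [hv]; field_simp]
  exact div_mem hfE (hE (Or.inl (Set.mem_insert δ _)))

section Descent

variable {K : Type*} [Field K] [CharZero K] [Algebra.IsAlgebraic ℚ K] {ι : Type*}

open Topology in
lemma exists_pos_forall_mul_norm_pow_le_eval_map [Fintype ι] [Nonempty ι] {m : ℕ}
    {f : MvPolynomial ι K} (hf : f.IsHomogeneous m)
    (hpos : ∀ σ : K →+* ℝ, ∀ x : ι → ℝ, x ≠ 0 → 0 < eval x (map σ f)) :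
    ∃ lam > 0, ∀ (σ : K →+* ℝ) (x : ι → ℝ), lam * ‖x‖ ^ m ≤ eval x (map σ f) := by
  have hconj : ∀ p ∈ Set.range fun σ : K →+* ℝ => map σ f,
      ∀ᶠ lam in 𝓝[>] (0 : ℝ), ∀ x : ι → ℝ, lam * ‖x‖ ^ m ≤ eval x p := by
    rintro _ ⟨σ, rfl⟩
    obtain ⟨lam, hlam, hσ⟩ := (hf.map σ).exists_pos_mul_norm_pow_le_eval (hpos σ)
    filter_upwards [Ioo_mem_nhdsGT hlam] with l hl x
    exact le_trans (by gcongr; exact hl.2.le) (hσ x)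
  obtain ⟨lam, hlam, hlam_pos⟩ :=
    (((finite_range_map f).eventually_all.mpr hconj).and self_mem_nhdsWithin).exists
  exact ⟨lam, hlam_pos, fun σ => hlam _ ⟨σ, rfl⟩⟩

lemma house'_pow_le_of_eval_eq (hK : ∀ σ : K →+* ℂ, ∀ x : K, (σ x).im = 0) [Fintype ι]
    {m : ℕ} {f : MvPolynomial ι K} {lam : ℝ} (hlam : 0 < lam)
    (hcoer : ∀ (σ : K →+* ℝ) (x : ι → ℝ), lam * ‖x‖ ^ m ≤ eval x (map σ f))
    {v : ι → K} {δ α : K} (hv : eval v f = δ * α) (j : ι) :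
    house' (v j) ^ m ≤ house' δ / lam * house' α := by
  obtain ⟨τ, hτ⟩ := exists_abs_eq_house'_of_forall_im_eq_zero hK (v j)
  have heval : eval (τ ∘ v) (map τ f) = τ (δ * α) := by
    rw [← hv, eval_map, ← eval₂_id, eval₂_comp_left, RingHom.comp_id]
  rw [div_mul_eq_mul_div, le_div_iff₀' hlam]
  calc lam * house' (v j) ^ m ≤ lam * ‖τ ∘ v‖ ^ m := by
        rw [← hτ, ← Real.norm_eq_abs]
        gcongr
        exact norm_le_pi_norm (τ ∘ v) j
    _ ≤ τ (δ * α) := heval ▸ hcoer τ (τ ∘ v)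
    _ ≤ house' (δ * α) := (le_abs_self _).trans (abs_le_house' τ _)
    _ ≤ house' δ * house' α := house'_mul_le δ α

theorem exists_house'_descent (hK : ∀ σ : K →+* ℂ, ∀ x : K, (σ x).im = 0) [Fintype ι]
    [Nonempty ι] {m : ℕ} (hm : 2 ≤ m) (O : Subalgebra ℤ K) {f : MvPolynomial ι K}
    (hf : f.IsHomogeneous m) (hpos : ∀ σ : K →+* ℝ, ∀ x : ι → ℝ, x ≠ 0 → 0 < eval x (map σ f))
    {δ d : K} (hδ : δ ≠ 0) (hd : d ≠ 0)
    (hrep : ∀ α ∈ O, IsTotallyPositive α → ∃ v : ι → K, (∀ j, d * v j ∈ O) ∧ eval v f = δ * α) :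
    ∃ c > 0, ∀ α ∈ {x | x ∈ O ∧ IsTotallyPositive x}, c ≤ house' α →
      ∃ B ⊆ {x | x ∈ O ∧ IsTotallyPositive x}, (∀ β ∈ B, house' β ≤ house' α - 1) ∧
        α ∈ IntermediateField.adjoin ℚ (insert δ (insert d (f.coeffs : Set K)) ∪ B) := by
  obtain ⟨lam, hlam, hcoer⟩ := exists_pos_forall_mul_norm_pow_le_eval_map hf hpos
  -- the threshold of `mul_add_le_sub_one_of_pow_le` for `a = 2 * house' d`, `b = 2` and
  -- `C = house' δ / lam`
  refine ⟨4 * (2 * house' d) ^ 2 * max 1 (house' δ / lam) + 2 * 2 + 2, by positivity,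
    fun α ⟨hαO, hα⟩ hc => ?_⟩
  obtain ⟨v, hvO, hv⟩ := hrep α hαO hα
  choose t ht using fun j => exists_natCast_add_isTotallyPositive (d * v j)
  refine ⟨Set.range fun j => d * v j + t j, ?_, ?_, mem_adjoin_of_eval_eq t hδ hd hv⟩
  · rintro _ ⟨j, rfl⟩
    exact ⟨add_mem (hvO j) (Subalgebra.natCast_mem O (t j)), (ht j).1⟩
  · rintro _ ⟨j, rfl⟩
    calc house' (d * v j + t j) ≤ 2 * house' (d * v j) + 2 := (ht j).2
      _ ≤ 2 * house' d * house' (v j) + 2 := by linarith [house'_mul_le d (v j)]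
      _ ≤ house' α - 1 := mul_add_le_sub_one_of_pow_le hm (by positivity [house'_nonneg d])
          zero_le_two (house'_nonneg _) (house'_pow_le_of_eval_eq hK hlam hcoer hv j) hc

end Descent

theorem subset_adjoin_of_descent {F K : Type*} [Field F] [Field K] [Algebra F K] {S G : Set K}
    (h : K → ℝ) {c : ℝ} (hc : 0 < c)
    (hdesc : ∀ α ∈ S, c ≤ h α →
      ∃ B ⊆ S, (∀ β ∈ B, h β ≤ h α - 1) ∧ α ∈ IntermediateField.adjoin F (G ∪ B)) :
    S ⊆ IntermediateField.adjoin F (G ∪ {α | α ∈ S ∧ h α < c}) := by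
  intro α hα
  induction hN : ⌈h α⌉₊ using Nat.strong_induction_on generalizing α with
  | _ N ih =>
  by_cases hsmall : h α < c
  · exact IntermediateField.subset_adjoin F _ (Or.inr ⟨hα, hsmall⟩)
  obtain ⟨B, hBS, hBh, hαB⟩ := hdesc α hα (not_lt.mp hsmall)
  refine IntermediateField.adjoin_le_iff.mpr (Set.union_subset ?_ fun β hβ => ?_) hαB
  · exact Set.subset_union_left.trans (IntermediateField.subset_adjoin F _)
  · have hpos : 0 < ⌈h α⌉₊ := Nat.ceil_pos.mpr (hc.trans_le (not_lt.mp hsmall))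
    have hlt : ⌈h β⌉₊ ≤ ⌈h α⌉₊ - 1 := Nat.ceil_sub_one (h α) ▸ Nat.ceil_mono (hBh β hβ)
    exact ih ⌈h β⌉₊ (by omega) (hBS hβ) rfl

lemma exists_ne_zero_forall_mul_mem {K : Type*} [Field K] (O : Subalgebra ℤ K)
    (hOfrac : ∀ x : K, ∃ a ∈ O, ∃ b ∈ O, b ≠ 0 ∧ x = a / b) (s : Finset K) :
    ∃ d ∈ O, d ≠ 0 ∧ ∀ x ∈ s, d * x ∈ O := by
  classical
  induction s using Finset.induction_on with
  | empty => exact ⟨1, one_mem O, one_ne_zero, by simp⟩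
  | insert x s _ ih =>
    obtain ⟨d, hdO, hd0, hd⟩ := ih
    obtain ⟨a, haO, b, hbO, hb0, rfl⟩ := hOfrac x
    refine ⟨b * d, mul_mem hbO hdO, mul_ne_zero hb0 hd0, ?_⟩
    rintro y hy
    rcases Finset.mem_insert.mp hy with rfl | hy
    · rw [show b * d * (a / b) = d * a by field_simp]
      exact mul_mem hdO haO
    · rw [mul_assoc]
      exact mul_mem hbO (hd y hy)

lemma exists_ne_zero_forall_mul_mem_of_fg {K ι : Type*} [Field K] [Fintype ι] (O : Subalgebra ℤ K)
    (hOfrac : ∀ x : K, ∃ a ∈ O, ∃ b ∈ O, b ≠ 0 ∧ x = a / b) {Λ : Submodule O (ι → K)}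
    (hΛ : Λ.FG) : ∃ d : K, d ≠ 0 ∧ ∀ v ∈ Λ, ∀ j, d * v j ∈ O := by
  classical
  obtain ⟨s, rfl⟩ := hΛ
  obtain ⟨d, -, hd0, hd⟩ :=
    exists_ne_zero_forall_mul_mem O hOfrac ((s ×ˢ Finset.univ).image fun p => p.1 p.2)
  refine ⟨d, hd0, fun v hv => ?_⟩
  induction hv using Submodule.span_induction with
  | mem w hw =>
    exact fun j => hd _ <|
      Finset.mem_image.mpr ⟨(w, j), Finset.mem_product.mpr ⟨hw, Finset.mem_univ j⟩, rfl⟩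
  | zero => simp
  | add v w _ _ hv hw => exact fun j => by simpa [mul_add] using add_mem (hv j) (hw j)
  | smul c v _ hv =>
    exact fun j => by simpa [Subalgebra.smul_def, mul_left_comm] using mul_mem c.2 (hv j)

lemma IntermediateField.eq_top_of_isTotallyPositive_subset {K : Type*} [Field K] [CharZero K]
    [Algebra.IsAlgebraic ℚ K] (O : Subalgebra ℤ K)
    (hOfrac : ∀ x : K, ∃ a ∈ O, ∃ b ∈ O, b ≠ 0 ∧ x = a / b) {E : IntermediateField ℚ K}
    (hE : {x | x ∈ O ∧ IsTotallyPositive x} ⊆ E) : E = ⊤ := by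
  have hOE : ∀ a ∈ O, a ∈ E := fun a ha => by
    obtain ⟨t, ht, -⟩ := exists_natCast_add_isTotallyPositive a
    simpa using sub_mem (hE ⟨add_mem ha (Subalgebra.natCast_mem O t), ht⟩) (natCast_mem E t)
  refine eq_top_iff.mpr fun x _ => ?_
  obtain ⟨a, ha, b, hb, -, rfl⟩ := hOfrac x
  exact div_mem (hOE a ha) (hOE b hb)

theorem no_northcott_of_represents_multiples_general
    (m : ℕ) (hm : 2 ≤ m)
    -- K is a totally real algebraic extension of ℚ of infinite degree
    (K : Type*) [Field K] [CharZero K] [Algebra.IsAlgebraic ℚ K]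
    (hK : ∀ σ : K →+* ℂ, ∀ x : K, (σ x).im = 0)
    (hKinf : ¬ FiniteDimensional ℚ K)
    -- δ is a totally positive algebraic integer of K
    (δ : K) (hδpos : ∀ σ : K →+* ℂ, 0 < (σ δ).re)
    -- O is an order in K
    (O : Subalgebra ℤ K)
    (hOfrac : ∀ x : K, ∃ a ∈ O, ∃ b ∈ O, b ≠ 0 ∧ x = a / b)
    -- there is an m-ic O-lattice representing all of δ·O⁺
    (hrep : ∃ (n : ℕ) (_ : 1 ≤ n) (Λ : Submodule O (Fin n → K))
        (f : MvPolynomial (Fin n) K),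
        Λ.FG ∧ f.IsHomogeneous m ∧
        (∀ σ : K →+* ℝ, ∀ x : Fin n → ℝ, x ≠ 0 → 0 < eval x (map σ f)) ∧
        (∀ v ∈ Λ, IsIntegral ℤ (eval v f)) ∧
        ∀ α : K, α ∈ O → (∀ σ : K →+* ℂ, 0 < (σ α).re) →
          ∃ v ∈ Λ, eval v f = δ * α) :
    -- then O⁺ does not have the Northcott property
    ¬ HasNorthcott {x : K | x ∈ O ∧ ∀ σ : K →+* ℂ, 0 < (σ x).re} := by
  intro hNorthcott
  obtain ⟨n, hn, Λ, f, hΛ, hf, hpos, -, hrep⟩ := hrep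
  have : Nonempty (Fin n) := ⟨⟨0, hn⟩⟩
  obtain ⟨d, hd, hdΛ⟩ := exists_ne_zero_forall_mul_mem_of_fg O hOfrac hΛ
  obtain ⟨c, hc, hdesc⟩ := exists_house'_descent hK hm O hf hpos
    (IsTotallyPositive.ne_zero hδpos) hd fun α hαO hα =>
      (hrep α hαO hα).imp fun v hv => ⟨hdΛ v hv.1, hv.2⟩
  set G : Set K := insert δ (insert d (f.coeffs : Set K)) ∪
    {α | α ∈ {x | x ∈ O ∧ IsTotallyPositive x} ∧ house' α < c}
  have : Finite G :=
    (((f.coeffs.finite_toSet.insert d).insert δ).union (hNorthcott c hc)).to_subtype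
  have hfin : FiniteDimensional ℚ (IntermediateField.adjoin ℚ G) :=
    IntermediateField.finiteDimensional_adjoin fun x _ =>
      (Algebra.IsAlgebraic.isAlgebraic x).isIntegral
  rw [IntermediateField.eq_top_of_isTotallyPositive_subset O hOfrac
    (subset_adjoin_of_descent house' hc hdesc)] at hfin
  exact hKinf IntermediateField.topEquiv.toLinearEquiv.finiteDimensional

theorem no_northcott_of_represents_multiples
    (m : ℕ) (hm : 2 ≤ m) (hme : Even m)
    -- K is a totally real algebraic extension of ℚ of infinite degree
    (K : Type*) [Field K] [CharZero K] [Algebra.IsAlgebraic ℚ K]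
    (hK : ∀ σ : K →+* ℂ, ∀ x : K, (σ x).im = 0)
    (hKinf : ¬ FiniteDimensional ℚ K)
    -- δ is a totally positive algebraic integer of K
    (δ : K) (hδint : IsIntegral ℤ δ) (hδpos : ∀ σ : K →+* ℂ, 0 < (σ δ).re)
    -- O is an order in K
    (O : Subalgebra ℤ K)
    (hOint : ∀ x ∈ O, IsIntegral ℤ x)
    (hOfrac : ∀ x : K, ∃ a ∈ O, ∃ b ∈ O, b ≠ 0 ∧ x = a / b)
    -- there is an m-ic O-lattice representing all of δ·O⁺
    (hrep : ∃ (n : ℕ) (_ : 1 ≤ n) (Λ : Submodule O (Fin n → K))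
        (f : MvPolynomial (Fin n) K),
        Λ.FG ∧ f.IsHomogeneous m ∧
        (∀ σ : K →+* ℝ, ∀ x : Fin n → ℝ, x ≠ 0 → 0 < eval x (map σ f)) ∧
        (∀ v ∈ Λ, IsIntegral ℤ (eval v f)) ∧
        ∀ α : K, α ∈ O → (∀ σ : K →+* ℂ, 0 < (σ α).re) →
          ∃ v ∈ Λ, eval v f = δ * α) :
    -- then O⁺ does not have the Northcott property
    ¬ HasNorthcott {x : K | x ∈ O ∧ ∀ σ : K →+* ℂ, 0 < (σ x).re} :=
  no_northcott_of_represents_multiples_general m hm K hK hKinf δ hδpos O hOfrac hrep
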